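/- arXiv:2605.04048 — 4 statements merged into one kernel-verified Lean document; each statement's English description precedes it below -/
import Mathlib

section
/- Let Y be a random variable on a probability space taking values in the natural numbers, and let d ≥ 2 be an integer. Then E[ dY/(Y+d−1) · 1_{Y ≥ 1} ] = d − d(d−1) ∫₀¹ z^{d−2} E[z^Y] dz, where E[z^Y] denotes the probability generating function of Y evaluated at z ∈ [0,1]. -/
open MeasureTheory intervalIntegral

/-!
Since `∫₀¹ z^(n+d-2) dz = 1/(n+d-1)`, Fubini turns the right-hand side into
`E[d - d(d-1)/(Y+d-1)]`, and `d - d(d-1)/(n+d-1)` equals `dn/(n+d-1)` for every `n`,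
including `n = 0`, where both sides vanish.
-/

lemma ite_one_le_mul_div_eq_sub (n : ℕ) {d : ℝ} (hd : 1 < d) :
    (if 1 ≤ n then d * n / (n + d - 1) else 0) = d - d * (d - 1) * (n + d - 1)⁻¹ := by
  have hpos : 0 < (n : ℝ) + d - 1 := by linarith [(n.cast_nonneg : (0 : ℝ) ≤ n)]
  split_ifs with hn
  · field_simp
    ring
  · obtain rfl : n = 0 := by omega
    have : d - 1 ≠ 0 := by linarith
    simp [this]

lemma integral_pow_sub_two_add_eq_inv (n : ℕ) {d : ℕ} (hd : 2 ≤ d) :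
    ∫ z in (0 : ℝ)..1, z ^ (d - 2 + n) = ((n : ℝ) + d - 1)⁻¹ := by
  rw [integral_pow, one_pow, zero_pow (Nat.succ_ne_zero _)]
  push_cast [Nat.cast_sub hd]
  ring_nf

lemma integrable_comp_nat_of_norm_le {Ω : Type*} [MeasurableSpace Ω] (μ : Measure Ω)
    [IsFiniteMeasure μ] {Y : Ω → ℕ} (hY : Measurable Y) {g : ℕ → ℝ} {C : ℝ}
    (hg : ∀ n, ‖g n‖ ≤ C) : Integrable (fun ω => g (Y ω)) μ :=
  .of_bound (measurable_from_top.comp hY).aestronglyMeasurable C (ae_of_all _ fun ω => hg (Y ω))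

lemma intervalIntegral_integral_pow_swap {Ω : Type*} [MeasurableSpace Ω]
    (μ : Measure Ω) [IsFiniteMeasure μ] {N : Ω → ℕ} (hN : Measurable N) :
    ∫ z in (0 : ℝ)..1, ∫ ω, z ^ N ω ∂μ = ∫ ω, (∫ z in (0 : ℝ)..1, z ^ N ω) ∂μ := by
  have : IsFiniteMeasure (volume.restrict (Set.uIoc (0 : ℝ) 1)) :=
    isFiniteMeasure_restrict.mpr measure_Ioc_lt_top.ne
  refine intervalIntegral_integral_swap (.of_bound ?_ 1 ?_)
  · exact (measurable_fst.pow (hN.comp measurable_snd)).aestronglyMeasurable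
  · have hmem : ∀ᵐ z ∂volume.restrict (Set.uIoc (0 : ℝ) 1), z ∈ Set.uIoc (0 : ℝ) 1 :=
      ae_restrict_mem measurableSet_uIoc
    filter_upwards [Measure.quasiMeasurePreserving_fst.ae hmem] with p hp
    rw [Set.uIoc_of_le zero_le_one] at hp
    simp only [Function.uncurry, Real.norm_eq_abs, abs_pow, abs_of_pos hp.1]
    exact pow_le_one₀ hp.1.le hp.2

/-- For an ℕ-valued random variable `Y` on a probability space and an integer
`d ≥ 2`,
`E[dY/(Y+d-1) · 1_{Y≥1}] = d - d(d-1) ∫₀¹ z^{d-2} E[z^Y] dz`,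
where `E[z^Y]` is the probability generating function of `Y`. -/
theorem mean_D4_integral_formula {Ω : Type*} [MeasurableSpace Ω]
    (μ : Measure Ω) [IsProbabilityMeasure μ]
    (Y : Ω → ℕ) (hY : Measurable Y) (d : ℕ) (hd : 2 ≤ d) :
    (∫ ω, (if 1 ≤ Y ω then (d : ℝ) * (Y ω : ℝ) / ((Y ω : ℝ) + (d : ℝ) - 1) else 0) ∂μ)
      = (d : ℝ) - (d : ℝ) * ((d : ℝ) - 1) *
          ∫ z in (0 : ℝ)..1, z ^ (d - 2) * ∫ ω, z ^ (Y ω) ∂μ := by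
  have hd' : (2 : ℝ) ≤ d := by exact_mod_cast hd
  have hinv_le : ∀ n : ℕ, ‖((n : ℝ) + d - 1)⁻¹‖ ≤ 1 := fun n => by
    have hn : (0 : ℝ) ≤ n := n.cast_nonneg
    rw [norm_inv, Real.norm_of_nonneg (by linarith)]
    exact inv_le_one_of_one_le₀ (by linarith)
  have hrhs : ∫ z in (0 : ℝ)..1, z ^ (d - 2) * ∫ ω, z ^ (Y ω) ∂μ
      = ∫ ω, ((Y ω : ℝ) + d - 1)⁻¹ ∂μ := calc
    _ = ∫ z in (0 : ℝ)..1, ∫ ω, z ^ (d - 2 + Y ω) ∂μ := by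
      simp only [pow_add, MeasureTheory.integral_const_mul]
    _ = ∫ ω, (∫ z in (0 : ℝ)..1, z ^ (d - 2 + Y ω)) ∂μ :=
      intervalIntegral_integral_pow_swap μ (measurable_const.add hY)
    _ = ∫ ω, ((Y ω : ℝ) + d - 1)⁻¹ ∂μ := by
      simp only [integral_pow_sub_two_add_eq_inv _ hd]
  simp only [ite_one_le_mul_div_eq_sub _ (one_lt_two.trans_le hd'), hrhs]
  rw [integral_sub (integrable_const _)
      ((integrable_comp_nat_of_norm_le μ hY hinv_le).const_mul _),
    MeasureTheory.integral_const, probReal_univ, one_smul, MeasureTheory.integral_const_mul]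
end

section
/- Let Y be an ℕ-valued random variable on a probability space with finite expectation, and let d ≥ 1 be an integer. Then E[ dY/(Y+d−1) · 1_{Y ≥ 1} ] ≤ d·(1 − E[(1−1/d)^Y]) ≤ E[min(d, Y)] ≤ E[Y]. -/
/-!
All four means are expectations of functions of `Y`, so it suffices to compare the integrands
pointwise: for `y : ℕ` and `q = 1 - 1/d`,
`d y / (y + d - 1) ≤ d (1 - q ^ y) ≤ min d y ≤ y`.
The middle inequality is Bernoulli's inequality `q ^ y ≥ 1 - y / d`; the first one is the
reverse estimate `q ^ y (y + d - 1) ≤ d - 1`, proved by induction on `y`.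
-/

open MeasureTheory

theorem pow_mul_add_mul_one_sub_le {q : ℝ} (hq₀ : 0 ≤ q) (hq₁ : q ≤ 1) (n : ℕ) :
    q ^ n * (q + n * (1 - q)) ≤ q := by
  induction n with
  | zero => simp
  | succ n ih =>
    have hpow : q ^ n * (1 - q) ≤ 1 - q :=
      mul_le_of_le_one_left (by linarith) (pow_le_one₀ hq₀ hq₁)
    calc q ^ (n + 1) * (q + (n + 1 : ℕ) * (1 - q))
        = q * (q ^ n * (q + n * (1 - q)) + q ^ n * (1 - q)) := by push_cast; ring
      _ ≤ q * (q + (1 - q)) := by gcongr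
      _ = q := by ring

theorem one_sub_one_div_mem_Icc {d : ℝ} (hd : 1 ≤ d) : 1 - 1 / d ∈ Set.Icc (0 : ℝ) 1 := by
  constructor
  · rw [sub_nonneg, div_le_one (by linarith)]
    exact hd
  · have : 0 < 1 / d := by positivity
    linarith

theorem one_sub_one_div_pow_mul_add_sub_one_le {d : ℝ} (hd : 1 ≤ d) (y : ℕ) :
    (1 - 1 / d) ^ y * (y + d - 1) ≤ d - 1 := by
  obtain ⟨hq₀, hq₁⟩ := one_sub_one_div_mem_Icc hd
  have key := pow_mul_add_mul_one_sub_le hq₀ hq₁ y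
  have hsum : 1 - 1 / d + y * (1 - (1 - 1 / d)) = (y + d - 1) / d := by field_simp; ring
  rw [hsum, mul_div_assoc', div_le_iff₀ (by linarith)] at key
  linarith [show (1 - 1 / d) * d = d - 1 by field_simp]

theorem mul_div_add_sub_one_le_mul_one_sub_pow {d : ℝ} (hd : 1 ≤ d) (y : ℕ) :
    d * y / (y + d - 1) ≤ d * (1 - (1 - 1 / d) ^ y) := by
  rcases Nat.eq_zero_or_pos y with rfl | hy
  · simp
  have hy' : (1 : ℝ) ≤ y := by exact_mod_cast hy
  rw [div_le_iff₀ (by linarith)]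
  nlinarith [one_sub_one_div_pow_mul_add_sub_one_le hd y]

theorem mul_div_add_sub_one_nonneg {d : ℝ} (hd : 1 ≤ d) (y : ℕ) : 0 ≤ d * y / (y + d - 1) := by
  have : 0 ≤ y + d - 1 := by linarith [y.cast_nonneg (α := ℝ)]
  positivity

theorem mul_one_sub_pow_le_min {d : ℝ} (hd : 1 ≤ d) (y : ℕ) :
    d * (1 - (1 - 1 / d) ^ y) ≤ min d y := by
  have hd₀ : 0 < d := by linarith
  have hq₀ := (one_sub_one_div_mem_Icc hd).1
  refine le_min ?_ ?_
  · nlinarith [pow_nonneg hq₀ y]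
  · have bernoulli := one_add_mul_le_pow (a := -(1 / d)) (by nlinarith [one_div_pos.mpr hd₀]) y
    rw [← sub_eq_add_neg] at bernoulli
    calc d * (1 - (1 - 1 / d) ^ y) ≤ d * (y * (1 / d)) := by gcongr; linarith
      _ = y := by field_simp

theorem integrable_comp_of_norm_le {Ω α E : Type*} [MeasurableSpace Ω] {μ : Measure Ω}
    [IsFiniteMeasure μ] [MeasurableSpace α] [Countable α] [MeasurableSingletonClass α]
    [NormedAddCommGroup E] {Y : Ω → α} (hY : Measurable Y) {f : α → E} {C : ℝ}
    (hf : ∀ a, ‖f a‖ ≤ C) : Integrable (fun ω => f (Y ω)) μ :=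
  .of_bound (StronglyMeasurable.of_discrete.comp_measurable hY).aestronglyMeasurable C
    (.of_forall fun _ => hf _)

/-- Ordering of the induced offspring means: for an ℕ-valued integrable
random variable `Y` and an integer `d ≥ 1`,
`E[dY/(Y+d-1)·1_{Y≥1}] ≤ d(1 - E[(1-1/d)^Y]) ≤ E[min(d,Y)] ≤ E[Y]`,
i.e. `μ⁽⁴⁾ ≤ μ⁽³⁾ ≤ μ⁽²⁾ ≤ μ⁽¹⁾` for the dispersal mechanisms D4–D1. -/
theorem ordering_of_offspring_means {Ω : Type*} [MeasurableSpace Ω]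
    (μ : Measure Ω) [IsProbabilityMeasure μ]
    (Y : Ω → ℕ) (hY : Measurable Y)
    (hint : Integrable (fun ω => (Y ω : ℝ)) μ)
    (d : ℕ) (hd : 1 ≤ d) :
    (∫ ω, (if 1 ≤ Y ω then (d : ℝ) * (Y ω : ℝ) / ((Y ω : ℝ) + (d : ℝ) - 1) else 0) ∂μ)
        ≤ (d : ℝ) * (1 - ∫ ω, (1 - 1 / (d : ℝ)) ^ (Y ω) ∂μ) ∧
    (d : ℝ) * (1 - ∫ ω, (1 - 1 / (d : ℝ)) ^ (Y ω) ∂μ)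
        ≤ (∫ ω, (min (d : ℝ) (Y ω : ℝ)) ∂μ) ∧
    (∫ ω, (min (d : ℝ) (Y ω : ℝ)) ∂μ) ≤ ∫ ω, (Y ω : ℝ) ∂μ := by
  have hd' : (1 : ℝ) ≤ d := by exact_mod_cast hd
  obtain ⟨hq₀, hq₁⟩ := one_sub_one_div_mem_Icc hd'
  have h43 := mul_div_add_sub_one_le_mul_one_sub_pow hd'
  have h32 := mul_one_sub_pow_le_min hd'
  have hD4 (n : ℕ) : (if 1 ≤ n then (d : ℝ) * n / (n + d - 1) else 0) = d * n / (n + d - 1) := by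
    split_ifs
    · rfl
    · simp [show n = 0 by omega]
  simp_rw [hD4]
  have i4 : Integrable (fun ω => (d : ℝ) * Y ω / (Y ω + d - 1)) μ :=
    integrable_comp_of_norm_le hY (C := d) fun n => by
      rw [Real.norm_of_nonneg (mul_div_add_sub_one_nonneg hd' n)]
      exact (h43 n).trans ((h32 n).trans (min_le_left _ _))
  have i3 : Integrable (fun ω => (1 - 1 / (d : ℝ)) ^ Y ω) μ :=
    integrable_comp_of_norm_le hY (C := 1) fun n => by
      rw [norm_pow, Real.norm_of_nonneg hq₀]
      exact pow_le_one₀ hq₀ hq₁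
  have i2 : Integrable (fun ω => min (d : ℝ) (Y ω)) μ :=
    integrable_comp_of_norm_le hY (f := fun n : ℕ => min (d : ℝ) n) (C := d) fun n => by
      rw [Real.norm_of_nonneg (by positivity)]
      exact min_le_left _ _
  have i3' := ((integrable_const (1 : ℝ)).sub i3).const_mul (d : ℝ)
  have hD3 : (d : ℝ) * (1 - ∫ ω, (1 - 1 / (d : ℝ)) ^ Y ω ∂μ)
      = ∫ ω, (d : ℝ) * (1 - (1 - 1 / (d : ℝ)) ^ Y ω) ∂μ := by
    rw [integral_const_mul, integral_sub (integrable_const 1) i3, integral_const]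
    simp
  rw [hD3]
  exact ⟨integral_mono i4 i3' fun ω => h43 _, integral_mono i3' i2 fun ω => h32 _,
    integral_mono i2 hint fun ω => min_le_right _ _⟩
end

section
/- Let d ≥ 2 be an integer, let p ∈ (0,1] with p > 1/d, and let a > 1/(d−1) be real. Then d − d(d−1) ∫₀¹ ((1−p) t^{d−2} + p t^{d−1}) / (1 + a t) dt > 1. -/
open intervalIntegral

/-- Let `d ≥ 2` be an integer, `p ∈ (0,1]` with `p > 1/d`, and `a > 1/(d-1)`.
Then `d - d(d-1) ∫₀¹ ((1-p) t^{d-2} + p t^{d-1}) / (1 + a t) dt > 1`: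
the mean number of colonies under uniform dispersal exceeds one. -/
theorem mu4_gt_one (d : ℕ) (hd : 2 ≤ d) (p a : ℝ)
    (hp : p ∈ Set.Ioc (0 : ℝ) 1) (hpd : 1 / (d : ℝ) < p) (ha : 1 / ((d : ℝ) - 1) < a) :
    1 < (d : ℝ) - (d : ℝ) * ((d : ℝ) - 1) *
        ∫ t in (0 : ℝ)..1, ((1 - p) * t ^ (d - 2) + p * t ^ (d - 1)) / (1 + a * t) := by
  obtain ⟨hp0, hp1⟩ := hp
  have hd2 : (2:ℝ) ≤ (d:ℝ) := by exact_mod_cast hd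
  have hd1 : (0:ℝ) < (d:ℝ) - 1 := by linarith
  have hd0 : (0:ℝ) < (d:ℝ) := by linarith
  have ha1 : 1 < ((d:ℝ) - 1) * a := by
    rw [div_lt_iff₀ hd1] at ha; linarith [ha]
  have ha0 : 0 < a := by nlinarith
  have hpd' : 1 < (d:ℝ) * p := by
    rw [div_lt_iff₀ hd0] at hpd; linarith [hpd]
  have hden : ∀ t : ℝ, 0 ≤ t → 0 < 1 + a * t := fun t ht => by nlinarith
  have hpow : d - 1 = (d - 2) + 1 := by omega
  -- pointwise bound
  have hle : ∀ t ∈ Set.Ioc (0:ℝ) 1,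
      ((1 - p) * t ^ (d - 2) + p * t ^ (d - 1)) / (1 + a * t)
        ≤ ((d:ℝ) - 1) / d * t ^ (d - 2) := by
    intro t ht
    obtain ⟨ht0, ht1⟩ := ht
    have hden' := hden t ht0.le
    rw [div_le_iff₀ hden', hpow, pow_succ]
    have hs : (0:ℝ) ≤ t ^ (d - 2) := pow_nonneg ht0.le _
    have h1 : (d:ℝ) * (1 - p + p * t) ≤ ((d:ℝ) - 1) * (1 + a * t) := by
      nlinarith [mul_nonneg (sub_nonneg.mpr hpd'.le) (sub_nonneg.mpr ht1),
        mul_nonneg (sub_nonneg.mpr ha1.le) ht0.le]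
    have h2 : (1 - p + p * t) ≤ ((d:ℝ) - 1) / d * (1 + a * t) := by
      rw [div_mul_eq_mul_div, le_div_iff₀ hd0]; nlinarith
    nlinarith [mul_le_mul_of_nonneg_left h2 hs]
  have key : (∫ t in (0:ℝ)..1, ((1 - p) * t ^ (d - 2) + p * t ^ (d - 1)) / (1 + a * t))
      < ∫ t in (0:ℝ)..1, ((d:ℝ) - 1) / d * t ^ (d - 2) := by
    apply intervalIntegral.integral_lt_integral_of_continuousOn_of_le_of_exists_lt
      one_pos
    · apply ContinuousOn.div
      · fun_prop
      · fun_prop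
      · intro t ht
        exact (hden t ht.1).ne'
    · fun_prop
    · exact hle
    · refine ⟨1, by norm_num, ?_⟩
      have : ((1 - p) * (1:ℝ) ^ (d - 2) + p * (1:ℝ) ^ (d - 1)) / (1 + a * 1) = 1 / (1 + a) := by
        simp
      rw [this]
      simp only [one_pow, mul_one]
      rw [div_lt_div_iff₀ (by linarith) hd0]
      nlinarith
  have hval : (∫ t in (0:ℝ)..1, ((d:ℝ) - 1) / d * t ^ (d - 2)) = 1 / d := by
    rw [intervalIntegral.integral_const_mul, integral_pow]
    have : ((d - 2 : ℕ) : ℝ) + 1 = (d:ℝ) - 1 := by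
      have : ((d - 2 : ℕ) : ℝ) = (d:ℝ) - 2 := by
        have h2d : (2:ℕ) ≤ d := hd
        push_cast [Nat.cast_sub h2d]
        ring
      rw [this]; ring
    rw [this]
    field_simp
    ring
  rw [hval] at key
  have hdd : 0 < (d:ℝ) * ((d:ℝ) - 1) := mul_pos hd0 hd1
  have heq : (d:ℝ) * ((d:ℝ) - 1) * (1 / d) = (d:ℝ) - 1 := by field_simp
  linarith [mul_lt_mul_of_pos_left key hdd, heq.le, heq.ge]
end

section
/- Let a ∈ (0,1) and let P and ψ be independent real random variables on a probability space such that ψ ∈ (0,1) almost surely with log ψ integrable, P ∈ (0,1] almost surely, and min(1, aP + (1−a)ψ) has the same distribution as P. Then log P is integrable and E[log ψ] ≤ E[log P] ≤ log( a + (1−a) E[ψ] ). -/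
open MeasureTheory ProbabilityTheory Real

/-!
Since `aP + (1-a)ψ ∈ (0,1]`, the truncation at `1` is inactive, so stationarity says that
`R = aP + (1-a)ψ` has the law of `P`; in particular `E[log R] = E[log P]`, and `log R` is integrable
because `(1-a)ψ ≤ R ≤ 1`. Concavity of `log` gives `E[log R] ≥ a E[log P] + (1-a) E[log ψ]`, which
rearranges to `E[log ψ] ≤ E[log P]`, and Jensen's inequality gives
`E[log R] ≤ log E[R] ≤ log (a + (1-a) E[ψ])`.
-/

theorem Real.mul_log_add_mul_log_le_log {a p x : ℝ} (ha : a ∈ Set.Icc (0 : ℝ) 1)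
    (hp : 0 < p) (hx : 0 < x) : a * log p + (1 - a) * log x ≤ log (a * p + (1 - a) * x) := by
  simpa only [smul_eq_mul] using
    strictConcaveOn_log_Ioi.concaveOn.2 hp hx ha.1 (sub_nonneg.2 ha.2) (add_sub_cancel a 1)

theorem Real.log_le_log_add_div_sub_one {x c : ℝ} (hx : 0 < x) (hc : 0 < c) :
    log x ≤ log c + x / c - 1 := by
  have h := log_le_sub_one_of_pos (div_pos hx hc)
  rw [log_div hx.ne' hc.ne'] at h
  linarith

section

variable {Ω : Type*} [MeasurableSpace Ω] {μ : Measure Ω}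

theorem integrable_log_of_le_of_le_one {X Y : Ω → ℝ} (hX : AEMeasurable X μ)
    (hlogY : Integrable (fun ω => log (Y ω)) μ)
    (hYX : ∀ᵐ ω ∂μ, 0 < Y ω ∧ Y ω ≤ X ω ∧ X ω ≤ 1) :
    Integrable (fun ω => log (X ω)) μ := by
  refine hlogY.mono (measurable_log.comp_aemeasurable hX).aestronglyMeasurable ?_
  filter_upwards [hYX] with ω ⟨hY, hYX, hX1⟩
  have hlogX : log (X ω) ≤ 0 := log_nonpos (hY.trans_le hYX).le hX1
  have hlog_mono : log (Y ω) ≤ log (X ω) := log_le_log hY hYX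
  rw [norm_eq_abs, norm_eq_abs, abs_of_nonpos hlogX, abs_of_nonpos (hlog_mono.trans hlogX)]
  linarith

theorem integrable_log_const_mul [IsFiniteMeasure μ] {c : ℝ} (hc : c ≠ 0) {Y : Ω → ℝ}
    (hY : ∀ᵐ ω ∂μ, Y ω ≠ 0) (hlogY : Integrable (fun ω => log (Y ω)) μ) :
    Integrable (fun ω => log (c * Y ω)) μ :=
  ((integrable_const (log c)).add hlogY).congr (hY.mono fun _ h => (log_mul hc h).symm)

theorem integral_pos_of_ae_pos [IsProbabilityMeasure μ] {X : Ω → ℝ} (hX : Integrable X μ)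
    (hpos : ∀ᵐ ω ∂μ, 0 < X ω) : 0 < ∫ ω, X ω ∂μ := by
  refine (integral_pos_iff_support_of_nonneg_ae (hpos.mono fun _ h => h.le) hX).2 ?_
  refine pos_iff_ne_zero.2 fun hsupp => ?_
  obtain ⟨ω, hω, hωsupp⟩ := (hpos.and (measure_eq_zero_iff_ae_notMem.1 hsupp)).exists
  exact hωsupp hω.ne'

theorem integral_log_le_log_integral [IsProbabilityMeasure μ] {X : Ω → ℝ} (hX : Integrable X μ)
    (hlogX : Integrable (fun ω => log (X ω)) μ) (hpos : ∀ᵐ ω ∂μ, 0 < X ω) :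
    ∫ ω, log (X ω) ∂μ ≤ log (∫ ω, X ω ∂μ) := by
  set m := ∫ ω, X ω ∂μ
  have hm : 0 < m := integral_pos_of_ae_pos hX hpos
  have hint : Integrable (fun ω => log m + X ω / m) μ := (integrable_const _).add (hX.div_const m)
  calc ∫ ω, log (X ω) ∂μ ≤ ∫ ω, (log m + X ω / m - 1) ∂μ :=
        integral_mono_ae hlogX (hint.sub (integrable_const _))
          (hpos.mono fun ω hω => log_le_log_add_div_sub_one hω hm)
    _ = log m := by
        rw [integral_sub hint (integrable_const 1),
          integral_add (integrable_const _) (hX.div_const m), integral_div]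
        simp only [integral_const, probReal_univ, one_smul]
        rw [show (∫ ω, X ω ∂μ) / m = 1 from div_self hm.ne']
        ring

theorem integrable_of_ae_mem_Icc [IsFiniteMeasure μ] {X : Ω → ℝ} (hX : AEStronglyMeasurable X μ)
    {c d : ℝ} (hcd : ∀ᵐ ω ∂μ, X ω ∈ Set.Icc c d) : Integrable X μ :=
  Integrable.of_bound hX (max |c| |d|) (hcd.mono fun _ h => abs_le_max_abs_abs h.1 h.2)

theorem mul_integral_log_add_mul_integral_log_le {a : ℝ} (ha : a ∈ Set.Icc (0 : ℝ) 1)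
    {X Y : Ω → ℝ} (hX : ∀ᵐ ω ∂μ, 0 < X ω) (hY : ∀ᵐ ω ∂μ, 0 < Y ω)
    (hlogX : Integrable (fun ω => log (X ω)) μ) (hlogY : Integrable (fun ω => log (Y ω)) μ)
    (hlogR : Integrable (fun ω => log (a * X ω + (1 - a) * Y ω)) μ) :
    a * ∫ ω, log (X ω) ∂μ + (1 - a) * ∫ ω, log (Y ω) ∂μ
      ≤ ∫ ω, log (a * X ω + (1 - a) * Y ω) ∂μ := by
  rw [← integral_const_mul, ← integral_const_mul,
    ← integral_add (hlogX.const_mul a) (hlogY.const_mul (1 - a))]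
  refine integral_mono_ae ((hlogX.const_mul a).add (hlogY.const_mul (1 - a))) hlogR ?_
  filter_upwards [hX, hY] with ω hXω hYω
  exact mul_log_add_mul_log_le_log ha hXω hYω

theorem integral_log_mul_add_mul_le_log [IsProbabilityMeasure μ] {a : ℝ}
    (ha : a ∈ Set.Icc (0 : ℝ) 1) {X Y : Ω → ℝ} (hX : Integrable X μ) (hY : Integrable Y μ)
    (hX_le_one : ∀ᵐ ω ∂μ, X ω ≤ 1) (hR_pos : ∀ᵐ ω ∂μ, 0 < a * X ω + (1 - a) * Y ω)
    (hlogR : Integrable (fun ω => log (a * X ω + (1 - a) * Y ω)) μ) :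
    ∫ ω, log (a * X ω + (1 - a) * Y ω) ∂μ ≤ log (a + (1 - a) * ∫ ω, Y ω ∂μ) := by
  have hR : Integrable (fun ω => a * X ω + (1 - a) * Y ω) μ :=
    (hX.const_mul a).add (hY.const_mul (1 - a))
  have hX_int_le_one : ∫ ω, X ω ∂μ ≤ 1 := by
    simpa using integral_mono_ae hX (integrable_const 1) hX_le_one
  have hR_int : ∫ ω, (a * X ω + (1 - a) * Y ω) ∂μ = a * ∫ ω, X ω ∂μ + (1 - a) * ∫ ω, Y ω ∂μ := by
    rw [integral_add (hX.const_mul a) (hY.const_mul (1 - a)), integral_const_mul,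
      integral_const_mul]
  calc ∫ ω, log (a * X ω + (1 - a) * Y ω) ∂μ
      ≤ log (∫ ω, (a * X ω + (1 - a) * Y ω) ∂μ) := integral_log_le_log_integral hR hlogR hR_pos
    _ ≤ log (a + (1 - a) * ∫ ω, Y ω ∂μ) := by
        refine log_le_log (integral_pos_of_ae_pos hR hR_pos) ?_
        rw [hR_int]
        nlinarith [ha.1]

end

theorem adaptive_log_survival_control_general {Ω : Type*} [MeasurableSpace Ω]
    (μ : Measure Ω) [IsProbabilityMeasure μ]
    (a : ℝ) (ha : a ∈ Set.Ioo (0 : ℝ) 1)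
    (P ψ : Ω → ℝ) (hPm : Measurable P) (hψm : Measurable ψ)
    (hψ01 : ∀ᵐ ω ∂μ, ψ ω ∈ Set.Ioo (0 : ℝ) 1)
    (hlogψ : Integrable (fun ω => Real.log (ψ ω)) μ)
    (hP01 : ∀ᵐ ω ∂μ, P ω ∈ Set.Ioc (0 : ℝ) 1)
    (hstat : μ.map (fun ω => min 1 (a * P ω + (1 - a) * ψ ω)) = μ.map P) :
    Integrable (fun ω => Real.log (P ω)) μ ∧
    (∫ ω, Real.log (ψ ω) ∂μ) ≤ (∫ ω, Real.log (P ω) ∂μ) ∧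
    (∫ ω, Real.log (P ω) ∂μ) ≤ Real.log (a + (1 - a) * ∫ ω, ψ ω ∂μ) := by
  obtain ⟨ha0, ha1⟩ := ha
  set R : Ω → ℝ := fun ω => a * P ω + (1 - a) * ψ ω
  have hRm : Measurable R := (hPm.const_mul a).add (hψm.const_mul (1 - a))
  have hR_bounds : ∀ᵐ ω ∂μ, 0 < (1 - a) * ψ ω ∧ (1 - a) * ψ ω ≤ R ω ∧ R ω ≤ 1 := by
    filter_upwards [hψ01, hP01] with ω ⟨hψ0, hψ1⟩ ⟨hP0, hP1⟩
    exact ⟨by positivity, by nlinarith, by nlinarith⟩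
  have hRP : IdentDistrib R P μ μ := by
    refine ⟨hRm.aemeasurable, hPm.aemeasurable, ?_⟩
    rw [← hstat]
    exact Measure.map_congr (hR_bounds.mono fun ω h => (min_eq_right h.2.2).symm)
  have hlogR : Integrable (fun ω => log (R ω)) μ := by
    refine integrable_log_of_le_of_le_one hRm.aemeasurable ?_ hR_bounds
    exact integrable_log_const_mul (sub_pos.2 ha1).ne' (hψ01.mono fun _ h => h.1.ne') hlogψ
  have hlog_ident := hRP.comp measurable_log
  have hlogP : Integrable (fun ω => log (P ω)) μ := hlog_ident.integrable_iff.1 hlogR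
  have hlog_eq : ∫ ω, log (R ω) ∂μ = ∫ ω, log (P ω) ∂μ := hlog_ident.integral_eq
  have hPint : Integrable P μ := integrable_of_ae_mem_Icc hPm.aestronglyMeasurable
    (hP01.mono fun _ h => Set.Ioc_subset_Icc_self h)
  have hψint : Integrable ψ μ := integrable_of_ae_mem_Icc hψm.aestronglyMeasurable
    (hψ01.mono fun _ h => Set.Ioo_subset_Icc_self h)
  refine ⟨hlogP, ?_, ?_⟩
  · have hconcave : a * ∫ ω, log (P ω) ∂μ + (1 - a) * ∫ ω, log (ψ ω) ∂μ ≤ ∫ ω, log (P ω) ∂μ :=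
      hlog_eq ▸ mul_integral_log_add_mul_integral_log_le ⟨ha0.le, ha1.le⟩
        (hP01.mono fun _ h => h.1) (hψ01.mono fun _ h => h.1) hlogP hlogψ hlogR
    nlinarith
  · exact hlog_eq ▸ integral_log_mul_add_mul_le_log ⟨ha0.le, ha1.le⟩ hPint hψint
      (hP01.mono fun _ h => h.2) (hR_bounds.mono fun _ h => h.1.trans_le h.2.1) hlogR

/-- Control of the adaptive log-survival term: if `a ∈ (0,1)`, `P` and `ψ` are
independent random variables with `ψ ∈ (0,1)` a.s., `log ψ` integrable,
`P ∈ (0,1]` a.s., and `min(1, aP + (1-a)ψ)` has the same law as `P`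
(stationarity), then `log P` is integrable and
`E[log ψ] ≤ E[log P] ≤ log(a + (1-a) E[ψ])`. -/
theorem adaptive_log_survival_control {Ω : Type*} [MeasurableSpace Ω]
    (μ : Measure Ω) [IsProbabilityMeasure μ]
    (a : ℝ) (ha : a ∈ Set.Ioo (0 : ℝ) 1)
    (P ψ : Ω → ℝ) (hPm : Measurable P) (hψm : Measurable ψ)
    (hindep : IndepFun P ψ μ)
    (hψ01 : ∀ᵐ ω ∂μ, ψ ω ∈ Set.Ioo (0 : ℝ) 1)
    (hlogψ : Integrable (fun ω => Real.log (ψ ω)) μ)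
    (hP01 : ∀ᵐ ω ∂μ, P ω ∈ Set.Ioc (0 : ℝ) 1)
    (hstat : μ.map (fun ω => min 1 (a * P ω + (1 - a) * ψ ω)) = μ.map P) :
    Integrable (fun ω => Real.log (P ω)) μ ∧
    (∫ ω, Real.log (ψ ω) ∂μ) ≤ (∫ ω, Real.log (P ω) ∂μ) ∧
    (∫ ω, Real.log (P ω) ∂μ) ≤ Real.log (a + (1 - a) * ∫ ω, ψ ω ∂μ) :=
  adaptive_log_survival_control_general μ a ha P ψ hPm hψm hψ01 hlogψ hP01 hstat
end
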